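/- Let δ: M → P be a crossed module of groups and a ∈ P. Then the data (δ_a: M → P(a)), where P(a) = {(m,p) | δ(m) = [a,p]} with operation (n,q)+(m,p) = (m + n^p, q+p), δ_a(m) = (-m^a + m, δ(m)), and action n^{(m,p)} = n^p, forms a crossed module of groups. -/

import Mathlib

/-- A crossed module of groups: groups `M`, `P` (written multiplicatively here,
translating the paper's additive notation), a homomorphism `δ : M →* P`, and a
right action of `P` on `M` by group endomorphisms (automorphisms, by
invertibility of the action), satisfying CM1 and CM2. -/
structure CrossedModule (M P : Type*) [Group M] [Group P] where
  δ : M →* P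
  act : P → M →* M
  act_one : ∀ m : M, act 1 m = m
  act_mul : ∀ (p q : P) (m : M), act (p * q) m = act q (act p m)
  cm1 : ∀ (p : P) (m : M), δ (act p m) = p⁻¹ * δ m * p
  cm2 : ∀ m n : M, n⁻¹ * m * n = act (δ n) m

/-!
`P(a)` is a subgroup of the semidirect product of `M` and `P` for the right action, and the
axioms are direct computations with CM1 and CM2. The one idea is in CM1 for `δ_a`: for
`(m, p) ∈ P(a)`, CM2 says that conjugation by `m` acts on `M` as `δ m = a⁻¹ p⁻¹ a p`, which
converts the action of `p a` into that of `a p`.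
-/

namespace CrossedModule

variable {M P : Type*} [Group M] [Group P] (C : CrossedModule M P)

def pairMul (x y : M × P) : M × P := (y.1 * C.act y.2 x.1, x.2 * y.2)

def pairInv (x : M × P) : M × P := ((C.act x.2⁻¹ x.1)⁻¹, x.2⁻¹)

def commutatorLifts (a : P) : Set (M × P) := {x | C.δ x.1 = a⁻¹ * x.2⁻¹ * a * x.2}

def deltaAt (a : P) (m : M) : M × P := ((C.act a m)⁻¹ * m, C.δ m)

lemma act_act_inv (p : P) (m : M) : C.act p (C.act p⁻¹ m) = m := by
  rw [← C.act_mul, inv_mul_cancel, C.act_one]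

lemma pairMul_assoc (x y z : M × P) :
    C.pairMul (C.pairMul x y) z = C.pairMul x (C.pairMul y z) := by
  simp only [pairMul, map_mul, C.act_mul, mul_assoc]

lemma pairMul_one (x : M × P) : C.pairMul x (1, 1) = x := by
  simp [pairMul, C.act_one]

lemma one_pairMul (x : M × P) : C.pairMul (1, 1) x = x := by
  simp [pairMul]

lemma pairMul_pairInv (x : M × P) : C.pairMul x (C.pairInv x) = (1, 1) := by
  simp only [pairMul, pairInv, inv_mul_cancel, mul_inv_cancel]

lemma pairInv_pairMul (x : M × P) : C.pairMul (C.pairInv x) x = (1, 1) := by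
  simp only [pairMul, pairInv, map_inv, act_act_inv, mul_inv_cancel, inv_mul_cancel]

variable {C} {a : P}

lemma one_mem_commutatorLifts : ((1 : M), (1 : P)) ∈ C.commutatorLifts a := by
  simp [commutatorLifts]

lemma pairMul_mem_commutatorLifts {x y : M × P} (hx : x ∈ C.commutatorLifts a)
    (hy : y ∈ C.commutatorLifts a) : C.pairMul x y ∈ C.commutatorLifts a := by
  simp only [commutatorLifts, Set.mem_ofPred_eq, pairMul, map_mul, C.cm1] at *
  rw [hx, hy]
  group

lemma pairInv_mem_commutatorLifts {x : M × P} (hx : x ∈ C.commutatorLifts a) :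
    C.pairInv x ∈ C.commutatorLifts a := by
  simp only [commutatorLifts, Set.mem_ofPred_eq, pairInv, map_inv, C.cm1] at *
  rw [hx]
  group

variable (C a)

lemma deltaAt_mem_commutatorLifts (m : M) : C.deltaAt a m ∈ C.commutatorLifts a := by
  simp only [commutatorLifts, Set.mem_ofPred_eq, deltaAt, map_mul, map_inv, C.cm1]
  group

lemma pairMul_deltaAt (m n : M) :
    C.pairMul (C.deltaAt a n) (C.deltaAt a m) = C.deltaAt a (n * m) := by
  refine Prod.ext ?_ (map_mul C.δ n m).symm
  simp only [pairMul, deltaAt, ← C.cm2, map_mul]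
  group

variable {C a}

lemma conj_act_mul_of_mem_commutatorLifts {x : M × P} (hx : x ∈ C.commutatorLifts a) (n : M) :
    x.1⁻¹ * C.act (x.2 * a) n * x.1 = C.act (a * x.2) n := by
  rw [C.cm2, hx, ← C.act_mul]
  congr 2
  group

lemma pairInv_deltaAt_pairMul {x : M × P} (hx : x ∈ C.commutatorLifts a) (n : M) :
    C.pairMul (C.pairMul (C.pairInv x) (C.deltaAt a n)) x = C.deltaAt a (C.act x.2 n) := by
  refine Prod.ext ?_ (C.cm1 x.2 n).symm
  have hconj := conj_act_mul_of_mem_commutatorLifts hx n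
  rw [C.act_mul, C.act_mul] at hconj
  simp only [pairMul, pairInv, deltaAt, ← C.cm2, map_mul, map_inv, act_act_inv, ← hconj]
  group

end CrossedModule

open CrossedModule in
/-- the whole data `L𝓜[a] = (δ_a : M → P(a))`, with
`P(a) = {(m,p) | δ m = [a,p]}`, `(n,q)+(m,p) = (m + n^p, q+p)`,
`δ_a(m) = (-m^a + m, δ m)` and action `n^{(m,p)} = n^p`, is a crossed module
of groups. -/
theorem LMa_is_crossed_module {M P : Type*} [Group M] [Group P]
    (C : CrossedModule M P) (a : P) :
    let mem : M × P → Prop := fun x => C.δ x.1 = a⁻¹ * x.2⁻¹ * a * x.2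
    let op : M × P → M × P → M × P := fun x y => (y.1 * C.act y.2 x.1, x.2 * y.2)
    let neg : M × P → M × P := fun x => ((C.act x.2⁻¹ x.1)⁻¹, x.2⁻¹)
    let δa : M → M × P := fun m => ((C.act a m)⁻¹ * m, C.δ m)
    let actA : M × P → M → M := fun x n => C.act x.2 n
    -- P(a) is a group
    (∀ x y, mem x → mem y → mem (op x y)) ∧
    (∀ x y z, op (op x y) z = op x (op y z)) ∧
    mem ((1 : M), (1 : P)) ∧
    (∀ x, op x ((1 : M), (1 : P)) = x ∧ op ((1 : M), (1 : P)) x = x) ∧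
    (∀ x, mem x → mem (neg x) ∧ op x (neg x) = ((1 : M), (1 : P)) ∧
      op (neg x) x = ((1 : M), (1 : P))) ∧
    -- δ_a lands in P(a) and is a homomorphism
    (∀ m, mem (δa m)) ∧
    (∀ m n, op (δa n) (δa m) = δa (n * m)) ∧
    -- action of P(a) on M: unital, compatible with op, and by group homomorphisms
    (∀ n, actA ((1 : M), (1 : P)) n = n) ∧
    (∀ x y n, actA (op x y) n = actA y (actA x n)) ∧
    (∀ x n n', actA x (n * n') = actA x n * actA x n') ∧
    -- CM1 for δ_a
    (∀ x n, mem x → op (op (neg x) (δa n)) x = δa (actA x n)) ∧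
    -- CM2 for δ_a
    (∀ m n, actA (δa n) m = n⁻¹ * m * n) := by
  intro mem op neg δa actA
  exact ⟨fun _ _ => pairMul_mem_commutatorLifts, C.pairMul_assoc, one_mem_commutatorLifts,
    fun x => ⟨C.pairMul_one x, C.one_pairMul x⟩,
    fun x hx => ⟨pairInv_mem_commutatorLifts hx, C.pairMul_pairInv x, C.pairInv_pairMul x⟩,
    C.deltaAt_mem_commutatorLifts a, C.pairMul_deltaAt a,
    C.act_one, fun x y => C.act_mul x.2 y.2, fun x => map_mul (C.act x.2),
    fun _ n hx => pairInv_deltaAt_pairMul hx n, fun m n => (C.cm2 m n).symm⟩
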